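/- Let ρ_1 = diag(1,1,0,0)/2, ρ_2 = diag(0,1,1,0)/2, ρ_3 = diag(0,0,1,1)/2 in M_4 (commuting quantum states), and in M_2 let ψ_0 = [[1,0],[0,0]], ψ_+ = (1/2)[[1,1],[1,1]], ψ_1 = [[0,0],[0,1]]. The linear map T on S = span{ρ_1, ρ_2, ρ_3} determined by T(ρ_1) = ψ_0, T(ρ_2) = ψ_+, T(ρ_3) = ψ_1 is positive on S (it maps every positive semidefinite element of S to a positive semidefinite matrix), but there is no positive linear map T̃ : M_4 → M_2 with T̃(ρ_i) = T(ρ_i) for i = 1, 2, 3. -/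

import Mathlib

/-!
Since the `ρ_i` are diagonal, `a ρ_1 + b ρ_2 + c ρ_3 ≥ 0` means `a, a + b, b + c, c ≥ 0`; using
`ψ_+ + ψ_- = ψ_0 + ψ_1` the image is then a nonnegative combination of `ψ_0, ψ_±, ψ_1`
(of `ψ_0, ψ_+, ψ_1` if `b ≥ 0`, of `ψ_0, ψ_-, ψ_1` if `b ≤ 0`).

A positive extension `T` would be positive on the diagonal matrix units `e_k`, with
`T e_0 + T e_1 = 2 ψ_0` and `T e_2 + T e_3 = 2 ψ_1`. Hence `(T e_1)₁₁ = 0` and `(T e_2)₀₀ = 0`,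
and a positive semidefinite matrix with a vanishing diagonal entry has vanishing row and column
there, so the off-diagonal entries of `T e_1` and `T e_2` vanish, contradicting
`T e_1 + T e_2 = 2 ψ_+`.
-/

open scoped Kronecker ComplexOrder Matrix.Norms.L2Operator
open Matrix Filter Classical

/-- `M_d`, the algebra of `d × d` complex matrices. -/
abbrev Mat (d : ℕ) := Matrix (Fin d) (Fin d) ℂ

/-- A linear map `T : S → M_{d'}` on a subspace `S ⊆ M_d` is completely positive if for
every `n` and every positive semidefinite `P = Σ_j X_j ⊗ K_j` with `X_j ∈ S`, `K_j ∈ M_n`,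
the matrix `(T ⊗ id_n)(P) = Σ_j T(X_j) ⊗ K_j` is positive semidefinite. -/
def IsCPOn {d d' : ℕ} (S : Submodule ℂ (Mat d)) (T : S →ₗ[ℂ] Mat d') : Prop :=
  ∀ (n m : ℕ) (X : Fin m → S) (K : Fin m → Matrix (Fin n) (Fin n) ℂ),
    (∑ j, (X j : Mat d) ⊗ₖ K j).PosSemidef →
    (∑ j, (T (X j)) ⊗ₖ K j).PosSemidef

/-- Complete positivity for a linear map defined on all of `M_d`. -/
def IsCP {d d' : ℕ} (T : Mat d →ₗ[ℂ] Mat d') : Prop :=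
  ∀ (n m : ℕ) (X : Fin m → Mat d) (K : Fin m → Matrix (Fin n) (Fin n) ℂ),
    (∑ j, X j ⊗ₖ K j).PosSemidef →
    (∑ j, T (X j) ⊗ₖ K j).PosSemidef

noncomputable def rho161 : Mat 4 := !![1/2, 0, 0, 0; 0, 1/2, 0, 0; 0, 0, 0, 0; 0, 0, 0, 0]
noncomputable def rho162 : Mat 4 := !![0, 0, 0, 0; 0, 1/2, 0, 0; 0, 0, 1/2, 0; 0, 0, 0, 0]
noncomputable def rho163 : Mat 4 := !![0, 0, 0, 0; 0, 0, 0, 0; 0, 0, 1/2, 0; 0, 0, 0, 1/2]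
def psi0 : Mat 2 := !![1, 0; 0, 0]
noncomputable def psiPlus : Mat 2 := !![1/2, 1/2; 1/2, 1/2]
def psi1 : Mat 2 := !![0, 0; 0, 1]

namespace Matrix.PosSemidef

variable {n 𝕜 : Type*} [Fintype n] [RCLike 𝕜] {A : Matrix n n 𝕜}

theorem apply_eq_zero_of_diag_eq_zero [DecidableEq n] (hA : A.PosSemidef) {j : n}
    (hj : A j j = 0) (i : n) : A i j = 0 := by
  have hcol := (hA.dotProduct_mulVec_zero_iff (Pi.single j 1)).mp (by simpa using hj)
  simpa using congrFun hcol i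

theorem apply_eq_zero_of_diag_eq_zero' (hA : A.PosSemidef) {j : n} (hj : A j j = 0) (i : n) :
    A j i = 0 := by
  rw [← hA.isHermitian.apply, hA.apply_eq_zero_of_diag_eq_zero hj, star_zero]

end Matrix.PosSemidef

theorem posSemidef_diagonal_single (d : ℕ) (k : Fin d) :
    (diagonal (Pi.single k 1) : Mat d).PosSemidef :=
  posSemidef_diagonal_iff.mpr (Pi.single_nonneg.mpr zero_le_one)

theorem two_smul_rho161 :
    (2 : ℂ) • rho161 = diagonal (Pi.single 0 1) + diagonal (Pi.single 1 1) := by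
  ext i j; fin_cases i <;> fin_cases j <;> simp [rho161]

theorem two_smul_rho162 :
    (2 : ℂ) • rho162 = diagonal (Pi.single 1 1) + diagonal (Pi.single 2 1) := by
  ext i j; fin_cases i <;> fin_cases j <;> simp [rho162]

theorem two_smul_rho163 :
    (2 : ℂ) • rho163 = diagonal (Pi.single 2 1) + diagonal (Pi.single 3 1) := by
  ext i j; fin_cases i <;> fin_cases j <;> simp [rho163]

theorem two_smul_rho_combination (a b c : ℂ) :
    (2 : ℂ) • (a • rho161 + b • rho162 + c • rho163) = diagonal ![a, a + b, b + c, c] := by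
  ext i j; fin_cases i <;> fin_cases j <;> simp [rho161, rho162, rho163] <;> ring

noncomputable def psiMinus : Mat 2 := !![1/2, -1/2; -1/2, 1/2]

theorem psiPlus_add_psiMinus : psiPlus + psiMinus = psi0 + psi1 := by
  ext i j; fin_cases i <;> fin_cases j <;> simp [psiPlus, psiMinus, psi0, psi1] <;> norm_num

theorem posSemidef_psi0 : psi0.PosSemidef := by
  convert posSemidef_vecMulVec_self_star ![(1 : ℂ), 0] using 1
  ext i j; fin_cases i <;> fin_cases j <;> simp [psi0, vecMulVec]

theorem posSemidef_psi1 : psi1.PosSemidef := by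
  convert posSemidef_vecMulVec_self_star ![(0 : ℂ), 1] using 1
  ext i j; fin_cases i <;> fin_cases j <;> simp [psi1, vecMulVec]

theorem posSemidef_psiPlus : psiPlus.PosSemidef := by
  convert (posSemidef_vecMulVec_self_star ![(1 : ℂ), 1]).smul (show (0 : ℂ) ≤ 2⁻¹ by positivity)
    using 1
  ext i j; fin_cases i <;> fin_cases j <;> simp [psiPlus, vecMulVec]

theorem posSemidef_psiMinus : psiMinus.PosSemidef := by
  convert (posSemidef_vecMulVec_self_star ![(1 : ℂ), -1]).smul (show (0 : ℂ) ≤ 2⁻¹ by positivity)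
    using 1
  ext i j; fin_cases i <;> fin_cases j <;> simp [psiMinus, vecMulVec] <;> norm_num

theorem posSemidef_psi_combination {a b c : ℂ} (ha : 0 ≤ a) (hab : 0 ≤ a + b)
    (hbc : 0 ≤ b + c) (hc : 0 ≤ c) : (a • psi0 + b • psiPlus + c • psi1).PosSemidef := by
  have hb_im : b.im = 0 := by
    have ha_im := (Complex.le_def.mp ha).2
    have hab_im := (Complex.le_def.mp hab).2
    simp only [Complex.zero_im, Complex.add_im] at ha_im hab_im
    linarith
  rcases le_total 0 b.re with hb | hb
  · have hb : 0 ≤ b := Complex.le_def.mpr ⟨hb, hb_im.symm⟩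
    exact ((posSemidef_psi0.smul ha).add (posSemidef_psiPlus.smul hb)).add
      (posSemidef_psi1.smul hc)
  · have hb : 0 ≤ -b := Complex.le_def.mpr ⟨by simpa using hb, by simp [hb_im]⟩
    have hpsi : a • psi0 + b • psiPlus + c • psi1
        = (a + b) • psi0 + (-b) • psiMinus + (b + c) • psi1 := by
      rw [eq_sub_of_add_eq psiPlus_add_psiMinus]
      module
    rw [hpsi]
    exact ((posSemidef_psi0.smul hab).add (posSemidef_psiMinus.smul hb)).add
      (posSemidef_psi1.smul hbc)

/-- The map `ρ_1 ↦ ψ_0`, `ρ_2 ↦ ψ_+`, `ρ_3 ↦ ψ_1` is positive on `span{ρ_1, ρ_2, ρ_3}`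
but has no positive linear extension `M_4 → M_2`. -/
theorem stmt16 :
    (∀ a b c : ℂ, (a • rho161 + b • rho162 + c • rho163).PosSemidef →
        (a • psi0 + b • psiPlus + c • psi1).PosSemidef) ∧
    ¬ ∃ T : Mat 4 →ₗ[ℂ] Mat 2,
        (∀ A : Mat 4, A.PosSemidef → (T A).PosSemidef) ∧
        T rho161 = psi0 ∧ T rho162 = psiPlus ∧ T rho163 = psi1 := by
  constructor
  · intro a b c h
    have hdiag := posSemidef_diagonal_iff.mp (two_smul_rho_combination a b c ▸ h.smul zero_le_two)
    exact posSemidef_psi_combination (hdiag 0) (hdiag 1) (hdiag 2) (hdiag 3)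
  · rintro ⟨T, hT, h1, h2, h3⟩
    have hE (k : Fin 4) := hT _ (posSemidef_diagonal_single 4 k)
    have hsum1 := congrArg T two_smul_rho161
    have hsum2 := congrArg T two_smul_rho162
    have hsum3 := congrArg T two_smul_rho163
    rw [map_smul, map_add, h1] at hsum1
    rw [map_smul, map_add, h2] at hsum2
    rw [map_smul, map_add, h3] at hsum3
    have h11 := (add_eq_zero_iff_of_nonneg (hE 0).diag_nonneg (hE 1).diag_nonneg).mp
      (by simpa [psi0] using (congrFun₂ hsum1 1 1).symm)
    have h00 := (add_eq_zero_iff_of_nonneg (hE 2).diag_nonneg (hE 3).diag_nonneg).mp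
      (by simpa [psi1] using (congrFun₂ hsum3 0 0).symm)
    have h10 := (hE 1).apply_eq_zero_of_diag_eq_zero' h11.2 0
    have h20 := (hE 2).apply_eq_zero_of_diag_eq_zero h00.1 1
    have h_plus10 := congrFun₂ hsum2 1 0
    simp [h10, h20, psiPlus] at h_plus10
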